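/- Let A = ⊕_{n≥0} A_n be an ℕ-graded bialgebra over a field k: the grading is an algebra grading (1 ∈ A_0, A_p·A_q ⊆ A_{p+q}), Δ(A_n) is contained in Σ_{p+q=n} A_p ⊗ A_q, and ε vanishes on A_n for n > 0. Give A ⊗ A the induced grading with (A⊗A)_ℓ = ⊕_{p+q=ℓ} A_p ⊗ A_q and let π_ℓ : A ⊗ A → (A⊗A)_ℓ denote the projection. Let σ : A ⊗ A → k be a linear map satisfying the multiplicative cocycle identity (ε⊗σ)*(σ∘(id⊗m)) = (σ⊗ε)*(σ∘(m⊗id)) in the convolution algebra of linear maps A⊗A⊗A → k, and such that σ restricted to A_0 ⊗ A_0 equals ε⊗ε. Set σ_i = σ∘π_i, and suppose s ≥ 1 is the least positive integer with σ_s ≠ 0. Then the graded infinitesimal part σ_s is a Hochschild 2-cocycle: ε⊗σ_s + σ_s∘(id⊗m) = σ_s⊗ε + σ_s∘(m⊗id) as linear maps A⊗A⊗A → k. -/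

import Mathlib

open TensorProduct

universe u

/-- The convolution product of two linear maps from a coalgebra to an algebra. -/
noncomputable def conv {k C B : Type*} [CommRing k]
    [AddCommGroup C] [Module k C] [Coalgebra k C]
    [Ring B] [Algebra k B] (f g : C →ₗ[k] B) : C →ₗ[k] B :=
  LinearMap.mul' k B ∘ₗ TensorProduct.map f g ∘ₗ Coalgebra.comul

section

variable {k A : Type u} [Field k] [Ring A] [Bialgebra k A]

/-- The projection of `A` onto its `i`-th graded component, for a grading
`𝒜 : ℕ → Submodule k A`. -/
noncomputable def gradedProj (𝒜 : ℕ → Submodule k A) [DirectSum.Decomposition 𝒜]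
    (i : ℕ) : A →ₗ[k] A :=
  (𝒜 i).subtype ∘ₗ (DirectSum.component k ℕ (fun j => (𝒜 j : Submodule k A)) i)
    ∘ₗ (DirectSum.decomposeLinearEquiv 𝒜).toLinearMap

/-- The projection `π_ℓ : A ⊗ A → (A⊗A)_ℓ = ⊕_{p+q=ℓ} A_p ⊗ A_q` of `A ⊗ A` onto its
`ℓ`-th graded component. -/
noncomputable def tensorProj (𝒜 : ℕ → Submodule k A) [DirectSum.Decomposition 𝒜]
    (ℓ : ℕ) : A ⊗[k] A →ₗ[k] A ⊗[k] A :=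
  ∑ p ∈ Finset.range (ℓ + 1),
    TensorProduct.map (gradedProj 𝒜 p) (gradedProj 𝒜 (ℓ - p))

/-- `ε⊗f : x⊗(y⊗z) ↦ ε(x)f(y⊗z)`. -/
noncomputable def epsTensor (f : A ⊗[k] A →ₗ[k] k) : A ⊗[k] (A ⊗[k] A) →ₗ[k] k :=
  LinearMap.mul' k k ∘ₗ TensorProduct.map (Coalgebra.counit : A →ₗ[k] k) f

/-- `f⊗ε : x⊗(y⊗z) ↦ f(x⊗y)ε(z)`. -/
noncomputable def tensorEps (f : A ⊗[k] A →ₗ[k] k) : A ⊗[k] (A ⊗[k] A) →ₗ[k] k :=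
  LinearMap.mul' k k ∘ₗ TensorProduct.map f (Coalgebra.counit : A →ₗ[k] k)
    ∘ₗ (TensorProduct.assoc k A A A).symm.toLinearMap

/-- `f∘(id⊗m) : x⊗(y⊗z) ↦ f(x ⊗ yz)`. -/
noncomputable def fIdMul (f : A ⊗[k] A →ₗ[k] k) : A ⊗[k] (A ⊗[k] A) →ₗ[k] k :=
  f ∘ₗ TensorProduct.map LinearMap.id (LinearMap.mul' k A)

/-- `f∘(m⊗id) : x⊗(y⊗z) ↦ f(xy ⊗ z)`. -/
noncomputable def fMulId (f : A ⊗[k] A →ₗ[k] k) : A ⊗[k] (A ⊗[k] A) →ₗ[k] k :=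
  f ∘ₗ TensorProduct.map (LinearMap.mul' k A) LinearMap.id
    ∘ₗ (TensorProduct.assoc k A A A).symm.toLinearMap

section Aux

set_option linter.unusedSectionVars false

variable (𝒜 : ℕ → Submodule k A) [DirectSum.Decomposition 𝒜]

lemma aux_gradedProj_of_mem {i n : ℕ} {a : A} (ha : a ∈ 𝒜 n) :
    gradedProj 𝒜 i a = if i = n then a else 0 := by
  have : gradedProj 𝒜 i a = ((DirectSum.decompose 𝒜 a) i : A) := rfl
  rw [this]
  split_ifs with h
  · subst h; exact DirectSum.decompose_of_mem_same 𝒜 ha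
  · exact DirectSum.decompose_of_mem_ne 𝒜 ha (Ne.symm h)

lemma aux_tensorProj_tmul {ℓ u v : ℕ} {a b : A} (ha : a ∈ 𝒜 u) (hb : b ∈ 𝒜 v) :
    tensorProj 𝒜 ℓ (a ⊗ₜ[k] b) = if u + v = ℓ then a ⊗ₜ[k] b else 0 := by
  rw [tensorProj]
  simp only [LinearMap.coe_sum, Finset.sum_apply, TensorProduct.map_tmul,
    aux_gradedProj_of_mem 𝒜 ha, aux_gradedProj_of_mem 𝒜 hb]
  split_ifs with h
  · rw [Finset.sum_eq_single u]
    · rw [if_pos rfl, if_pos (by omega)]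
    · intro p hp hpu
      rw [if_neg hpu, TensorProduct.zero_tmul]
    · intro hu
      simp only [Finset.mem_range] at hu; omega
  · apply Finset.sum_eq_zero
    intro p hp
    simp only [Finset.mem_range] at hp
    split_ifs with h1 h2
    · subst h1; omega
    · exact TensorProduct.tmul_zero _ _
    · exact TensorProduct.zero_tmul _ _
    · exact TensorProduct.zero_tmul _ _

/-- `x ∈ A ⊗ A` has a representation as a sum of homogeneous pure tensors of
total degree `n`. -/
def AuxHasRepr (n : ℕ) (x : A ⊗[k] A) : Prop :=
  ∃ (m : ℕ) (f g : Fin m → A) (d : Fin m → ℕ),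
    (∀ i, d i ≤ n ∧ f i ∈ 𝒜 (d i) ∧ g i ∈ 𝒜 (n - d i)) ∧
    x = ∑ i, f i ⊗ₜ[k] g i

lemma AuxHasRepr.zero (n : ℕ) : AuxHasRepr 𝒜 n (0 : A ⊗[k] A) :=
  ⟨0, ![], ![], ![], by simp, by simp⟩

lemma AuxHasRepr.add {n : ℕ} {x y : A ⊗[k] A} (hx : AuxHasRepr 𝒜 n x)
    (hy : AuxHasRepr 𝒜 n y) : AuxHasRepr 𝒜 n (x + y) := by
  obtain ⟨m1, f1, g1, d1, h1, rfl⟩ := hx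
  obtain ⟨m2, f2, g2, d2, h2, rfl⟩ := hy
  refine ⟨m1 + m2, Fin.append f1 f2, Fin.append g1 g2, Fin.append d1 d2, ?_, ?_⟩
  · intro i
    refine Fin.addCases (fun j => ?_) (fun j => ?_) i
    · simpa [Fin.append_left] using h1 j
    · simpa [Fin.append_right] using h2 j
  · rw [Fin.sum_univ_add]
    simp [Fin.append_left, Fin.append_right]

lemma aux_repr_of_mem (n : ℕ) (x : A ⊗[k] A)
    (hx : x ∈ ⨆ p ∈ Finset.range (n + 1),
        LinearMap.range (TensorProduct.map ((𝒜 p).subtype) ((𝒜 (n - p)).subtype))) :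
    AuxHasRepr 𝒜 n x := by
  refine Submodule.iSup_induction _ (motive := AuxHasRepr 𝒜 n) hx ?_ (AuxHasRepr.zero 𝒜 n)
    (fun _ _ => AuxHasRepr.add 𝒜)
  intro p y hy
  by_cases hp : p ∈ Finset.range (n + 1)
  · rw [iSup_pos hp] at hy
    obtain ⟨t, rfl⟩ := hy
    have hpn : p ≤ n := Nat.lt_succ_iff.mp (Finset.mem_range.mp hp)
    induction t using TensorProduct.induction_on with
    | zero => simpa using AuxHasRepr.zero 𝒜 n
    | tmul a b =>
        exact ⟨1, ![(a : A)], ![(b : A)], ![p],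
          fun i => ⟨by simpa using hpn, by simpa using a.2, by simpa using b.2⟩, by simp⟩
    | add u v hu hv => rw [map_add]; exact AuxHasRepr.add 𝒜 hu hv
  · rw [iSup_neg hp] at hy
    simp only [Submodule.mem_bot] at hy
    subst hy
    exact AuxHasRepr.zero 𝒜 n

lemma aux_sum_counit_smul_right {a : A} {m : ℕ} {f g : Fin m → A}
    (h : Coalgebra.comul (R := k) a = ∑ i, f i ⊗ₜ[k] g i) :
    ∑ i, Coalgebra.counit (R := k) (f i) • g i = a := by
  have h2 := Coalgebra.rTensor_counit_comul (R := k) a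
  rw [h, map_sum] at h2
  have h3 := congrArg (TensorProduct.lid k A) h2
  simpa [map_sum] using h3

lemma aux_sum_counit_smul_left {a : A} {m : ℕ} {f g : Fin m → A}
    (h : Coalgebra.comul (R := k) a = ∑ i, f i ⊗ₜ[k] g i) :
    ∑ i, Coalgebra.counit (R := k) (g i) • f i = a := by
  have h2 := Coalgebra.lTensor_counit_comul (R := k) a
  rw [h, map_sum] at h2
  have h3 := congrArg (TensorProduct.rid k A) h2
  simpa [map_sum] using h3

lemma aux_epsTensor_apply (f : A ⊗[k] A →ₗ[k] k) (a c e : A) :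
    epsTensor f (a ⊗ₜ[k] (c ⊗ₜ[k] e)) = Coalgebra.counit (R := k) a * f (c ⊗ₜ[k] e) := by
  simp [epsTensor]

lemma aux_tensorEps_apply (f : A ⊗[k] A →ₗ[k] k) (a c e : A) :
    tensorEps f (a ⊗ₜ[k] (c ⊗ₜ[k] e)) = f (a ⊗ₜ[k] c) * Coalgebra.counit (R := k) e := by
  simp [tensorEps]

lemma aux_fIdMul_apply (f : A ⊗[k] A →ₗ[k] k) (a c e : A) :
    fIdMul f (a ⊗ₜ[k] (c ⊗ₜ[k] e)) = f (a ⊗ₜ[k] (c * e)) := by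
  simp [fIdMul]

lemma aux_fMulId_apply (f : A ⊗[k] A →ₗ[k] k) (a c e : A) :
    fMulId f (a ⊗ₜ[k] (c ⊗ₜ[k] e)) = f ((a * c) ⊗ₜ[k] e) := by
  simp [fMulId]

set_option maxHeartbeats 1000000 in
set_option synthInstance.maxHeartbeats 400000 in
lemma aux_conv_tmul_repr (F G : A ⊗[k] (A ⊗[k] A) →ₗ[k] k) (x y z : A)
    {m1 m2 m3 : ℕ} {a b : Fin m1 → A} {c d : Fin m2 → A} {e f : Fin m3 → A}
    (hx : Coalgebra.comul (R := k) x = ∑ i, a i ⊗ₜ[k] b i)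
    (hy : Coalgebra.comul (R := k) y = ∑ j, c j ⊗ₜ[k] d j)
    (hz : Coalgebra.comul (R := k) z = ∑ l, e l ⊗ₜ[k] f l) :
    conv F G (x ⊗ₜ[k] (y ⊗ₜ[k] z))
      = ∑ i, ∑ j, ∑ l,
          F (a i ⊗ₜ[k] (c j ⊗ₜ[k] e l)) * G (b i ⊗ₜ[k] (d j ⊗ₜ[k] f l)) := by
  have hcom : Coalgebra.comul (R := k) (x ⊗ₜ[k] (y ⊗ₜ[k] z))
      = ∑ i, ∑ j, ∑ l,
          (a i ⊗ₜ[k] (c j ⊗ₜ[k] e l)) ⊗ₜ[k] (b i ⊗ₜ[k] (d j ⊗ₜ[k] f l)) := by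
    show (TensorProduct.tensorTensorTensorComm k A A (A ⊗[k] A) (A ⊗[k] A))
        (TensorProduct.map Coalgebra.comul Coalgebra.comul (x ⊗ₜ (y ⊗ₜ z))) = _
    have hyz : Coalgebra.comul (R := k) (y ⊗ₜ[k] z)
        = ∑ j, ∑ l, (c j ⊗ₜ[k] e l) ⊗ₜ[k] (d j ⊗ₜ[k] f l) := by
      show (TensorProduct.tensorTensorTensorComm k A A A A)
          (TensorProduct.map Coalgebra.comul Coalgebra.comul (y ⊗ₜ z)) = _
      rw [TensorProduct.map_tmul, hy, hz, TensorProduct.sum_tmul]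
      simp only [TensorProduct.tmul_sum, map_sum,
        TensorProduct.tensorTensorTensorComm_tmul]
    rw [TensorProduct.map_tmul, hx, hyz, TensorProduct.sum_tmul]
    simp only [TensorProduct.tmul_sum, map_sum,
      TensorProduct.tensorTensorTensorComm_tmul]
  rw [conv]
  simp only [LinearMap.comp_apply, hcom, map_sum, TensorProduct.map_tmul,
    LinearMap.mul'_apply]

/-- Per-term identity for the left-hand side of the cocycle identity. -/
lemma aux_term_left
    (hmul : ∀ p q : ℕ, ∀ a ∈ 𝒜 p, ∀ b ∈ 𝒜 q, a * b ∈ 𝒜 (p + q))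
    (hcounit : ∀ n : ℕ, 0 < n → ∀ a ∈ 𝒜 n, Coalgebra.counit a = (0 : k))
    (σ : A ⊗[k] A →ₗ[k] k)
    (hzero : ∀ a ∈ 𝒜 0, ∀ b ∈ 𝒜 0,
        σ (a ⊗ₜ[k] b) = Coalgebra.counit a * Coalgebra.counit b)
    (s : ℕ) (hs : 1 ≤ s)
    (hsig : ∀ u v : ℕ, ∀ a ∈ 𝒜 u, ∀ b ∈ 𝒜 v, 0 < u + v → u + v < s → σ (a ⊗ₜ[k] b) = 0)
    (p q r p' q' r' : ℕ) (hpqr : p + q + r = s)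
    (hp' : p' ≤ p) (hq' : q' ≤ q) (hr' : r' ≤ r)
    (x1 x2 y1 y2 z1 z2 : A)
    (hx1 : x1 ∈ 𝒜 p') (hx2 : x2 ∈ 𝒜 (p - p'))
    (hy1 : y1 ∈ 𝒜 q') (hy2 : y2 ∈ 𝒜 (q - q'))
    (hz1 : z1 ∈ 𝒜 r') (hz2 : z2 ∈ 𝒜 (r - r')) :
    Coalgebra.counit (R := k) x1 * σ (y1 ⊗ₜ[k] z1) * σ (x2 ⊗ₜ[k] (y2 * z2))
      = Coalgebra.counit (R := k) x1 * (Coalgebra.counit (R := k) y1 *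
          Coalgebra.counit (R := k) z1) * σ (x2 ⊗ₜ[k] (y2 * z2))
        + Coalgebra.counit (R := k) x1 * σ (y1 ⊗ₜ[k] z1) *
            (Coalgebra.counit (R := k) x2 * (Coalgebra.counit (R := k) y2 *
              Coalgebra.counit (R := k) z2)) := by
  rcases Nat.eq_zero_or_pos p' with hp0 | hp0
  swap
  · rw [hcounit p' hp0 x1 hx1]; ring
  subst hp0
  have hx2' : x2 ∈ 𝒜 p := by simpa using hx2
  rcases Nat.lt_trichotomy 0 (q' + r') with hqr | hqr | hqr
  · rcases Nat.lt_or_ge (q' + r') s with hlt | hge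
    · have h1 : σ (y1 ⊗ₜ[k] z1) = 0 := hsig q' r' y1 hy1 z1 hz1 hqr hlt
      have h2 : Coalgebra.counit (R := k) y1 * Coalgebra.counit (R := k) z1 = 0 := by
        rcases Nat.lt_or_ge 0 q' with h | h
        · rw [hcounit q' h y1 hy1]; ring
        · rw [hcounit r' (by omega) z1 hz1]; ring
      rw [h1, h2]; ring
    · have hq'q : q' = q := by omega
      have hr'r : r' = r := by omega
      have hp0 : p = 0 := by omega
      have hx2'' : x2 ∈ 𝒜 0 := by rwa [hp0] at hx2'
      have hy2' : y2 ∈ 𝒜 0 := by rwa [show q - q' = 0 by omega] at hy2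
      have hz2' : z2 ∈ 𝒜 0 := by rwa [show r - r' = 0 by omega] at hz2
      have hmul0 : y2 * z2 ∈ 𝒜 0 := by simpa using hmul 0 0 y2 hy2' z2 hz2'
      have h3 : σ (x2 ⊗ₜ[k] (y2 * z2)) = Coalgebra.counit (R := k) x2 *
          (Coalgebra.counit (R := k) y2 * Coalgebra.counit (R := k) z2) := by
        rw [hzero x2 hx2'' (y2 * z2) hmul0, Bialgebra.counit_mul]
      have h4 : Coalgebra.counit (R := k) y1 * Coalgebra.counit (R := k) z1 = 0 := by
        rcases Nat.lt_or_ge 0 q' with h | h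
        · rw [hcounit q' h y1 hy1]; ring
        · rw [hcounit r' (by omega) z1 hz1]; ring
      rw [h3, h4]; ring
  · have hq0 : q' = 0 := by omega
    have hr0 : r' = 0 := by omega
    subst hq0; subst hr0
    have h1 : σ (y1 ⊗ₜ[k] z1) = Coalgebra.counit (R := k) y1 *
        Coalgebra.counit (R := k) z1 := hzero y1 hy1 z1 hz1
    have h2 : Coalgebra.counit (R := k) x2 * (Coalgebra.counit (R := k) y2 *
        Coalgebra.counit (R := k) z2) = 0 := by
      have hy2' : y2 ∈ 𝒜 q := by simpa using hy2
      have hz2' : z2 ∈ 𝒜 r := by simpa using hz2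
      rcases Nat.lt_or_ge 0 p with h | h
      · rw [hcounit p h x2 hx2']; ring
      · rcases Nat.lt_or_ge 0 q with h' | h'
        · rw [hcounit q h' y2 hy2']; ring
        · rw [hcounit r (by omega) z2 hz2']; ring
    rw [h1, h2]; ring
  · omega

/-- Per-term identity for the right-hand side of the cocycle identity. -/
lemma aux_term_right
    (hmul : ∀ p q : ℕ, ∀ a ∈ 𝒜 p, ∀ b ∈ 𝒜 q, a * b ∈ 𝒜 (p + q))
    (hcounit : ∀ n : ℕ, 0 < n → ∀ a ∈ 𝒜 n, Coalgebra.counit a = (0 : k))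
    (σ : A ⊗[k] A →ₗ[k] k)
    (hzero : ∀ a ∈ 𝒜 0, ∀ b ∈ 𝒜 0,
        σ (a ⊗ₜ[k] b) = Coalgebra.counit a * Coalgebra.counit b)
    (s : ℕ) (hs : 1 ≤ s)
    (hsig : ∀ u v : ℕ, ∀ a ∈ 𝒜 u, ∀ b ∈ 𝒜 v, 0 < u + v → u + v < s → σ (a ⊗ₜ[k] b) = 0)
    (p q r p' q' r' : ℕ) (hpqr : p + q + r = s)
    (hp' : p' ≤ p) (hq' : q' ≤ q) (hr' : r' ≤ r)
    (x1 x2 y1 y2 z1 z2 : A)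
    (hx1 : x1 ∈ 𝒜 p') (hx2 : x2 ∈ 𝒜 (p - p'))
    (hy1 : y1 ∈ 𝒜 q') (hy2 : y2 ∈ 𝒜 (q - q'))
    (hz1 : z1 ∈ 𝒜 r') (hz2 : z2 ∈ 𝒜 (r - r')) :
    σ (x1 ⊗ₜ[k] y1) * Coalgebra.counit (R := k) z1 * σ ((x2 * y2) ⊗ₜ[k] z2)
      = Coalgebra.counit (R := k) x1 * Coalgebra.counit (R := k) y1 *
          Coalgebra.counit (R := k) z1 * σ ((x2 * y2) ⊗ₜ[k] z2)
        + σ (x1 ⊗ₜ[k] y1) * (Coalgebra.counit (R := k) x2 *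
            Coalgebra.counit (R := k) y2) *
            (Coalgebra.counit (R := k) z1 * Coalgebra.counit (R := k) z2) := by
  rcases Nat.eq_zero_or_pos r' with hr0 | hr0
  swap
  · rw [hcounit r' hr0 z1 hz1]; ring
  subst hr0
  have hz2' : z2 ∈ 𝒜 r := by simpa using hz2
  rcases Nat.lt_trichotomy 0 (p' + q') with hpq | hpq | hpq
  · rcases Nat.lt_or_ge (p' + q') s with hlt | hge
    · have h1 : σ (x1 ⊗ₜ[k] y1) = 0 := hsig p' q' x1 hx1 y1 hy1 hpq hlt
      have h2 : Coalgebra.counit (R := k) x1 * Coalgebra.counit (R := k) y1 = 0 := by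
        rcases Nat.lt_or_ge 0 p' with h | h
        · rw [hcounit p' h x1 hx1]; ring
        · rw [hcounit q' (by omega) y1 hy1]; ring
      rw [h1, h2]; ring
    · have hp'p : p' = p := by omega
      have hq'q : q' = q := by omega
      have hr0 : r = 0 := by omega
      have hx2' : x2 ∈ 𝒜 0 := by rwa [show p - p' = 0 by omega] at hx2
      have hy2' : y2 ∈ 𝒜 0 := by rwa [show q - q' = 0 by omega] at hy2
      have hz2'' : z2 ∈ 𝒜 0 := by rwa [hr0] at hz2'
      have hmul0 : x2 * y2 ∈ 𝒜 0 := by simpa using hmul 0 0 x2 hx2' y2 hy2'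
      have h3 : σ ((x2 * y2) ⊗ₜ[k] z2) = Coalgebra.counit (R := k) x2 *
          Coalgebra.counit (R := k) y2 * Coalgebra.counit (R := k) z2 := by
        rw [hzero (x2 * y2) hmul0 z2 hz2'', Bialgebra.counit_mul]
      have h4 : Coalgebra.counit (R := k) x1 * Coalgebra.counit (R := k) y1 = 0 := by
        rcases Nat.lt_or_ge 0 p' with h | h
        · rw [hcounit p' h x1 hx1]; ring
        · rw [hcounit q' (by omega) y1 hy1]; ring
      rw [h3, h4]; ring
  · have hp0 : p' = 0 := by omega
    have hq0 : q' = 0 := by omega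
    subst hp0; subst hq0
    have h1 : σ (x1 ⊗ₜ[k] y1) = Coalgebra.counit (R := k) x1 *
        Coalgebra.counit (R := k) y1 := hzero x1 hx1 y1 hy1
    have h2 : Coalgebra.counit (R := k) x2 * Coalgebra.counit (R := k) y2 *
        Coalgebra.counit (R := k) z2 = 0 := by
      have hx2' : x2 ∈ 𝒜 p := by simpa using hx2
      have hy2' : y2 ∈ 𝒜 q := by simpa using hy2
      rcases Nat.lt_or_ge 0 p with h | h
      · rw [hcounit p h x2 hx2']; ring
      · rcases Nat.lt_or_ge 0 q with h' | h'
        · rw [hcounit q h' y2 hy2']; ring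
        · rw [hcounit r (by omega) z2 hz2']; ring
    rw [h1]
    linear_combination (-(Coalgebra.counit (R := k) x1 * Coalgebra.counit (R := k) y1 *
      Coalgebra.counit (R := k) z1)) * h2
  · omega


lemma aux_tmul_sum_sum (σ : A ⊗[k] A →ₗ[k] k) {m2 m3 : ℕ} (β : Fin m2 → k)
    (γ : Fin m3 → k) (d0 : Fin m2 → A) (f0 : Fin m3 → A) :
    σ ((∑ j, β j • d0 j) ⊗ₜ[k] (∑ l, γ l • f0 l))
      = ∑ j, ∑ l, β j * γ l * σ (d0 j ⊗ₜ[k] f0 l) := by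
  rw [TensorProduct.sum_tmul, map_sum]
  refine Finset.sum_congr rfl fun j _ => ?_
  rw [← TensorProduct.smul_tmul', map_smul, TensorProduct.tmul_sum, map_sum,
    Finset.smul_sum]
  refine Finset.sum_congr rfl fun l _ => ?_
  rw [TensorProduct.tmul_smul, map_smul]
  simp only [smul_eq_mul]; ring

lemma aux_tmul_mul_sum (σ : A ⊗[k] A →ₗ[k] k) {m1 m2 m3 : ℕ} (α : Fin m1 → k)
    (β : Fin m2 → k) (γ : Fin m3 → k) (b0 : Fin m1 → A) (d0 : Fin m2 → A)
    (f0 : Fin m3 → A) :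
    σ ((∑ i, α i • b0 i) ⊗ₜ[k] ((∑ j, β j • d0 j) * (∑ l, γ l • f0 l)))
      = ∑ i, ∑ j, ∑ l, α i * (β j * γ l) * σ (b0 i ⊗ₜ[k] (d0 j * f0 l)) := by
  have hW : (∑ j, β j • d0 j) * (∑ l, γ l • f0 l)
      = ∑ j, ∑ l, (β j * γ l) • (d0 j * f0 l) := by
    rw [Finset.sum_mul]
    refine Finset.sum_congr rfl fun j _ => ?_
    rw [Finset.mul_sum]
    exact Finset.sum_congr rfl fun l _ => smul_mul_smul_comm _ _ _ _
  rw [hW, TensorProduct.sum_tmul, map_sum]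
  refine Finset.sum_congr rfl fun i _ => ?_
  rw [← TensorProduct.smul_tmul', map_smul, TensorProduct.tmul_sum, map_sum,
    Finset.smul_sum]
  refine Finset.sum_congr rfl fun j _ => ?_
  rw [TensorProduct.tmul_sum, map_sum, Finset.smul_sum]
  refine Finset.sum_congr rfl fun l _ => ?_
  rw [TensorProduct.tmul_smul, map_smul]
  simp only [smul_eq_mul]; ring

lemma aux_mul_sum_tmul (σ : A ⊗[k] A →ₗ[k] k) {m1 m2 m3 : ℕ} (α : Fin m1 → k)
    (β : Fin m2 → k) (γ : Fin m3 → k) (b0 : Fin m1 → A) (d0 : Fin m2 → A)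
    (f0 : Fin m3 → A) :
    σ (((∑ i, α i • b0 i) * (∑ j, β j • d0 j)) ⊗ₜ[k] (∑ l, γ l • f0 l))
      = ∑ i, ∑ j, ∑ l, α i * β j * γ l * σ ((b0 i * d0 j) ⊗ₜ[k] f0 l) := by
  have hW : (∑ i, α i • b0 i) * (∑ j, β j • d0 j)
      = ∑ i, ∑ j, (α i * β j) • (b0 i * d0 j) := by
    rw [Finset.sum_mul]
    refine Finset.sum_congr rfl fun i _ => ?_
    rw [Finset.mul_sum]
    exact Finset.sum_congr rfl fun j _ => smul_mul_smul_comm _ _ _ _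
  rw [hW, TensorProduct.sum_tmul, map_sum]
  refine Finset.sum_congr rfl fun i _ => ?_
  rw [TensorProduct.sum_tmul, map_sum]
  refine Finset.sum_congr rfl fun j _ => ?_
  rw [← TensorProduct.smul_tmul', map_smul, TensorProduct.tmul_sum, map_sum,
    Finset.smul_sum]
  refine Finset.sum_congr rfl fun l _ => ?_
  rw [TensorProduct.tmul_smul, map_smul]
  simp only [smul_eq_mul]; ring

end Aux

set_option maxHeartbeats 2000000 in
theorem graded_infinitesimal_part_is_hochschild_cocycle
    (𝒜 : ℕ → Submodule k A) [DirectSum.Decomposition 𝒜]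
    (hone : (1 : A) ∈ 𝒜 0)
    (hmul : ∀ p q : ℕ, ∀ a ∈ 𝒜 p, ∀ b ∈ 𝒜 q, a * b ∈ 𝒜 (p + q))
    (hcomul : ∀ n : ℕ, ∀ a ∈ 𝒜 n,
        Coalgebra.comul a ∈
          ⨆ p ∈ Finset.range (n + 1),
            LinearMap.range (TensorProduct.map ((𝒜 p).subtype) ((𝒜 (n - p)).subtype)))
    (hcounit : ∀ n : ℕ, 0 < n → ∀ a ∈ 𝒜 n, Coalgebra.counit a = (0 : k))
    (σ : A ⊗[k] A →ₗ[k] k)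
    (hcoc : conv (epsTensor σ) (fIdMul σ) = conv (tensorEps σ) (fMulId σ))
    (hzero : ∀ a ∈ 𝒜 0, ∀ b ∈ 𝒜 0,
        σ (a ⊗ₜ[k] b) = Coalgebra.counit a * Coalgebra.counit b)
    (s : ℕ) (hs : 1 ≤ s)
    (hsne : σ ∘ₗ tensorProj 𝒜 s ≠ 0)
    (hleast : ∀ i : ℕ, 0 < i → i < s → σ ∘ₗ tensorProj 𝒜 i = 0) :
    epsTensor (σ ∘ₗ tensorProj 𝒜 s) + fIdMul (σ ∘ₗ tensorProj 𝒜 s)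
      = tensorEps (σ ∘ₗ tensorProj 𝒜 s) + fMulId (σ ∘ₗ tensorProj 𝒜 s) := by
  have hsig : ∀ u v : ℕ, ∀ a ∈ 𝒜 u, ∀ b ∈ 𝒜 v, 0 < u + v → u + v < s →
      σ (a ⊗ₜ[k] b) = 0 := by
    intro u v a ha b hb h1 h2
    have h3 := LinearMap.congr_fun (hleast (u + v) h1 h2) (a ⊗ₜ[k] b)
    rwa [LinearMap.comp_apply, aux_tensorProj_tmul 𝒜 ha hb, if_pos rfl,
      LinearMap.zero_apply] at h3
  have hσs : ∀ (u v : ℕ) (a : A), a ∈ 𝒜 u → ∀ b : A, b ∈ 𝒜 v →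
      (σ ∘ₗ tensorProj 𝒜 s) (a ⊗ₜ[k] b) = if u + v = s then σ (a ⊗ₜ[k] b) else 0 := by
    intro u v a ha b hb
    rw [LinearMap.comp_apply, aux_tensorProj_tmul 𝒜 ha hb]
    split_ifs <;> simp
  suffices H : ∀ (p q r : ℕ) (x : A), x ∈ 𝒜 p → ∀ y : A, y ∈ 𝒜 q → ∀ z : A, z ∈ 𝒜 r →
      (epsTensor (σ ∘ₗ tensorProj 𝒜 s) + fIdMul (σ ∘ₗ tensorProj 𝒜 s))
          (x ⊗ₜ[k] (y ⊗ₜ[k] z))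
        = (tensorEps (σ ∘ₗ tensorProj 𝒜 s) + fMulId (σ ∘ₗ tensorProj 𝒜 s))
          (x ⊗ₜ[k] (y ⊗ₜ[k] z)) by
    refine TensorProduct.ext' fun x w => ?_
    induction w using TensorProduct.induction_on with
    | zero => simp
    | add u v hu hv => rw [TensorProduct.tmul_add, map_add, map_add, hu, hv]
    | tmul y z =>
      induction x using DirectSum.Decomposition.inductionOn 𝒜 with
      | zero => simp
      | add x1 x2 h1 h2 => rw [TensorProduct.add_tmul, map_add, map_add, h1, h2]
      | homogeneous xm =>
        induction y using DirectSum.Decomposition.inductionOn 𝒜 with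
        | zero => simp
        | add y1 y2 h1 h2 =>
            rw [TensorProduct.add_tmul, TensorProduct.tmul_add, map_add, map_add, h1, h2]
        | homogeneous ym =>
          induction z using DirectSum.Decomposition.inductionOn 𝒜 with
          | zero => simp
          | add z1 z2 h1 h2 =>
              rw [TensorProduct.tmul_add, TensorProduct.tmul_add, map_add, map_add, h1, h2]
          | homogeneous zm => exact H _ _ _ _ xm.2 _ ym.2 _ zm.2
  intro p q r x hx y hy z hz
  obtain ⟨m1, a, b, da, hab, hXr⟩ := aux_repr_of_mem 𝒜 p _ (hcomul p x hx)
  obtain ⟨m2, c, d, dc, hcd, hYr⟩ := aux_repr_of_mem 𝒜 q _ (hcomul q y hy)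
  obtain ⟨m3, e, f, de, hef, hZr⟩ := aux_repr_of_mem 𝒜 r _ (hcomul r z hz)
  have hX := aux_sum_counit_smul_right hXr
  have hX' := aux_sum_counit_smul_left hXr
  have hY := aux_sum_counit_smul_right hYr
  have hY' := aux_sum_counit_smul_left hYr
  have hZ := aux_sum_counit_smul_right hZr
  have hZ' := aux_sum_counit_smul_left hZr
  have hyz : y * z ∈ 𝒜 (q + r) := hmul q r y hy z hz
  have hxy : x * y ∈ 𝒜 (p + q) := hmul p q x hx y hy
  simp only [LinearMap.add_apply, aux_epsTensor_apply, aux_fIdMul_apply,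
    aux_tensorEps_apply, aux_fMulId_apply]
  rw [hσs q r y hy z hz, hσs p (q + r) x hx (y * z) hyz, hσs p q x hx y hy,
    hσs (p + q) r (x * y) hxy z hz]
  by_cases hT : p + q + r = s
  · rw [if_pos (show p + (q + r) = s by omega), if_pos (show (p + q) + r = s by omega)]
    have A1 : Coalgebra.counit (R := k) x * (if q + r = s then σ (y ⊗ₜ[k] z) else 0)
        = Coalgebra.counit (R := k) x * σ (y ⊗ₜ[k] z) := by
      split_ifs with h
      · rfl
      · rw [hcounit p (by omega) x hx]; ring
    have A2 : (if p + q = s then σ (x ⊗ₜ[k] y) else 0) * Coalgebra.counit (R := k) z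
        = σ (x ⊗ₜ[k] y) * Coalgebra.counit (R := k) z := by
      split_ifs with h
      · rfl
      · rw [hcounit r (by omega) z hz]; ring
    rw [A1, A2]
    have key := LinearMap.congr_fun hcoc (x ⊗ₜ[k] (y ⊗ₜ[k] z))
    rw [aux_conv_tmul_repr _ _ x y z hXr hYr hZr,
      aux_conv_tmul_repr _ _ x y z hXr hYr hZr] at key
    simp only [aux_epsTensor_apply, aux_fIdMul_apply, aux_tensorEps_apply,
      aux_fMulId_apply] at key
    have S1 : σ (x ⊗ₜ[k] (y * z))
        = ∑ i, ∑ j, ∑ l, Coalgebra.counit (R := k) (a i) *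
            (Coalgebra.counit (R := k) (c j) * Coalgebra.counit (R := k) (e l)) *
            σ (b i ⊗ₜ[k] (d j * f l)) := by
      conv_lhs => rw [← hX, ← hY, ← hZ]
      exact aux_tmul_mul_sum σ _ _ _ _ _ _
    have hεx : Coalgebra.counit (R := k) x = ∑ i, Coalgebra.counit (R := k) (a i) *
        Coalgebra.counit (R := k) (b i) := by
      conv_lhs => rw [← hX]
      rw [map_sum]
      simp only [map_smul, smul_eq_mul]
    have S2 : Coalgebra.counit (R := k) x * σ (y ⊗ₜ[k] z)
        = ∑ i, ∑ j, ∑ l, Coalgebra.counit (R := k) (a i) * σ (c j ⊗ₜ[k] e l) *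
            (Coalgebra.counit (R := k) (b i) * (Coalgebra.counit (R := k) (d j) *
              Coalgebra.counit (R := k) (f l))) := by
      have hσyz : σ (y ⊗ₜ[k] z) = ∑ j, ∑ l, Coalgebra.counit (R := k) (d j) *
          Coalgebra.counit (R := k) (f l) * σ (c j ⊗ₜ[k] e l) := by
        conv_lhs => rw [← hY', ← hZ']
        exact aux_tmul_sum_sum σ _ _ _ _
      rw [hεx, hσyz, Finset.sum_mul]
      refine Finset.sum_congr rfl fun i _ => ?_
      rw [Finset.mul_sum]
      refine Finset.sum_congr rfl fun j _ => ?_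
      rw [Finset.mul_sum]
      exact Finset.sum_congr rfl fun l _ => by ring
    have L : (∑ i, ∑ j, ∑ l, Coalgebra.counit (R := k) (a i) * σ (c j ⊗ₜ[k] e l) *
          σ (b i ⊗ₜ[k] (d j * f l)))
        = σ (x ⊗ₜ[k] (y * z)) + Coalgebra.counit (R := k) x * σ (y ⊗ₜ[k] z) := by
      rw [S1, S2, ← Finset.sum_add_distrib]
      refine Finset.sum_congr rfl fun i _ => ?_
      rw [← Finset.sum_add_distrib]
      refine Finset.sum_congr rfl fun j _ => ?_
      rw [← Finset.sum_add_distrib]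
      refine Finset.sum_congr rfl fun l _ => ?_
      exact aux_term_left 𝒜 hmul hcounit σ hzero s hs hsig p q r (da i) (dc j) (de l)
        hT (hab i).1 (hcd j).1 (hef l).1 _ _ _ _ _ _ (hab i).2.1 (hab i).2.2
        (hcd j).2.1 (hcd j).2.2 (hef l).2.1 (hef l).2.2
    have S3 : σ ((x * y) ⊗ₜ[k] z)
        = ∑ i, ∑ j, ∑ l, Coalgebra.counit (R := k) (a i) * Coalgebra.counit (R := k) (c j) *
            Coalgebra.counit (R := k) (e l) * σ ((b i * d j) ⊗ₜ[k] f l) := by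
      conv_lhs => rw [← hX, ← hY, ← hZ]
      exact aux_mul_sum_tmul σ _ _ _ _ _ _
    have hεz : Coalgebra.counit (R := k) z = ∑ l, Coalgebra.counit (R := k) (e l) *
        Coalgebra.counit (R := k) (f l) := by
      conv_lhs => rw [← hZ]
      rw [map_sum]
      simp only [map_smul, smul_eq_mul]
    have S4 : σ (x ⊗ₜ[k] y) * Coalgebra.counit (R := k) z
        = ∑ i, ∑ j, ∑ l, σ (a i ⊗ₜ[k] c j) * (Coalgebra.counit (R := k) (b i) *
            Coalgebra.counit (R := k) (d j)) * (Coalgebra.counit (R := k) (e l) *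
              Coalgebra.counit (R := k) (f l)) := by
      have hσxy : σ (x ⊗ₜ[k] y) = ∑ i, ∑ j, Coalgebra.counit (R := k) (b i) *
          Coalgebra.counit (R := k) (d j) * σ (a i ⊗ₜ[k] c j) := by
        conv_lhs => rw [← hX', ← hY']
        exact aux_tmul_sum_sum σ _ _ _ _
      rw [hσxy, hεz, Finset.sum_mul]
      refine Finset.sum_congr rfl fun i _ => ?_
      rw [Finset.sum_mul]
      refine Finset.sum_congr rfl fun j _ => ?_
      rw [Finset.mul_sum]
      exact Finset.sum_congr rfl fun l _ => by ring
    have R : (∑ i, ∑ j, ∑ l, σ (a i ⊗ₜ[k] c j) * Coalgebra.counit (R := k) (e l) *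
          σ ((b i * d j) ⊗ₜ[k] f l))
        = σ ((x * y) ⊗ₜ[k] z) + σ (x ⊗ₜ[k] y) * Coalgebra.counit (R := k) z := by
      rw [S3, S4, ← Finset.sum_add_distrib]
      refine Finset.sum_congr rfl fun i _ => ?_
      rw [← Finset.sum_add_distrib]
      refine Finset.sum_congr rfl fun j _ => ?_
      rw [← Finset.sum_add_distrib]
      refine Finset.sum_congr rfl fun l _ => ?_
      exact aux_term_right 𝒜 hmul hcounit σ hzero s hs hsig p q r (da i) (dc j) (de l)
        hT (hab i).1 (hcd j).1 (hef l).1 _ _ _ _ _ _ (hab i).2.1 (hab i).2.2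
        (hcd j).2.1 (hcd j).2.2 (hef l).2.1 (hef l).2.2
    rw [L, R] at key
    linear_combination key
  · rw [if_neg (show ¬ p + (q + r) = s by omega),
      if_neg (show ¬ (p + q) + r = s by omega)]
    have A1 : Coalgebra.counit (R := k) x * (if q + r = s then σ (y ⊗ₜ[k] z) else 0)
        = 0 := by
      split_ifs with h
      · rw [hcounit p (by omega) x hx]; ring
      · ring
    have A2 : (if p + q = s then σ (x ⊗ₜ[k] y) else 0) * Coalgebra.counit (R := k) z
        = 0 := by
      split_ifs with h
      · rw [hcounit r (by omega) z hz]; ring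
      · ring
    rw [A1, A2]

end
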